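/- arXiv:2511.00722 — 8 statements merged into one kernel-verified Lean document; each statement's English description precedes it below -/
import Mathlib

section
/- For all natural numbers n, u_{3n} = u_n * (D*u_n^2 + 3*(-1)^n), where D = P^2 + 4. -/
def u (P : ℤ) : ℕ → ℤ
  | 0 => 0
  | 1 => 1
  | n + 2 => P * u P (n + 1) + u P n

def v (P : ℤ) : ℕ → ℤ
  | 0 => 2
  | 1 => P
  | n + 2 => P * v P (n + 1) + v P n

lemma u_add (P : ℤ) : ∀ m n : ℕ,
    u P (m + n + 1) = u P (m + 1) * u P (n + 1) + u P m * u P n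
  | 0, n => by simp [u]
  | 1, n => by
    rw [show 1 + n + 1 = n + 2 by ring]
    simp [u]
  | (m + 2), n => by
    have h1 := u_add P m n
    have h2 := u_add P (m + 1) n
    rw [show m + 2 + n + 1 = (m + n + 1) + 2 by ring]
    rw [show u P ((m + n + 1) + 2) = P * u P (m + n + 2) + u P (m + n + 1) from rfl]
    rw [show m + n + 2 = (m + 1) + n + 1 by ring] at *
    rw [h1, h2]
    rw [show u P (m + 2 + 1) = P * u P (m + 2) + u P (m + 1) from rfl,
        show u P (m + 2) = P * u P (m + 1) + u P m from rfl]
    ring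

lemma u_catalan (P : ℤ) : ∀ n : ℕ,
    u P (n + 2) * u P n - (u P (n + 1)) ^ 2 = (-1) ^ (n + 1)
  | 0 => by simp [u]
  | (n + 1) => by
    have h := u_catalan P n
    rw [show u P (n + 1 + 2) = P * u P (n + 2) + u P (n + 1) from rfl,
        show u P (n + 2) = P * u P (n + 1) + u P n from rfl] at *
    rw [pow_succ (-1 : ℤ) (n + 1), ← h]
    ring

theorem u_three_mul (P : ℤ) (n : ℕ) :
    u P (3 * n) = u P n * ((P ^ 2 + 4) * (u P n) ^ 2 + 3 * (-1) ^ n) := by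
  cases n with
  | zero => simp [u]
  | succ k =>
    have h3 : u P (3 * (k + 1)) = u P (2 * k + 2) * u P (k + 2) + u P (2 * k + 1) * u P (k + 1) := by
      rw [show 3 * (k + 1) = (2 * k + 1) + (k + 1) + 1 by ring]
      rw [u_add P (2 * k + 1) (k + 1)]
    have h2 : u P (2 * k + 2) = u P (k + 1) * u P (k + 2) + u P k * u P (k + 1) := by
      rw [show 2 * k + 2 = k + (k + 1) + 1 by ring, u_add P k (k + 1)]
    have h1 : u P (2 * k + 1) = u P (k + 1) * u P (k + 1) + u P k * u P k := by
      rw [show 2 * k + 1 = k + k + 1 by ring, u_add P k k]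
    have hc := u_catalan P k
    have hrec : u P (k + 2) = P * u P (k + 1) + u P k := rfl
    rw [hrec] at hc
    rw [h3, h2, h1, hrec]
    linear_combination (3 : ℤ) * u P (k + 1) * hc
end

section
/- For all natural numbers s ≥ t with s and t of the same parity, u_s + (-1)^((s-t)/2) * u_t = u_{(s+t)/2} * v_{(s-t)/2}. -/
lemma u_key (P : ℤ) : ∀ k m, k ≤ m →
    u P (m + k) + (-1) ^ k * u P (m - k) = u P m * v P k := by
  intro k
  induction k using Nat.twoStepInduction with
  | zero =>
    intro m _
    simp [v]
    ring
  | one =>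
    intro m hm
    obtain ⟨n, rfl⟩ : ∃ n, m = n + 1 := ⟨m - 1, by omega⟩
    show u P (n + 2) + (-1) ^ 1 * u P n = u P (n + 1) * v P 1
    rw [show u P (n + 2) = P * u P (n + 1) + u P n from rfl,
      show v P 1 = P from rfl]
    ring
  | more k ih1 ih2 =>
    intro m hm
    obtain ⟨j, rfl⟩ : ∃ j, m = j + k + 2 := ⟨m - k - 2, by omega⟩
    have h1 := ih1 (j + k + 2) (by omega)
    have h2 := ih2 (j + k + 2) (by omega)
    have e1 : j + k + 2 + (k + 2) = (j + k + 2 + k) + 2 := by omega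
    have e2 : j + k + 2 - (k + 2) = j := by omega
    have e3 : j + k + 2 - k = j + 2 := by omega
    have e4 : j + k + 2 - (k + 1) = j + 1 := by omega
    have e5 : j + k + 2 + (k + 1) = (j + k + 2 + k) + 1 := by omega
    rw [e2, e1]
    rw [e3] at h1
    rw [e4, e5] at h2
    rw [show u P ((j + k + 2 + k) + 2) = P * u P (j + k + 2 + k + 1) + u P (j + k + 2 + k) from rfl,
      show v P (k + 2) = P * v P (k + 1) + v P k from rfl,
      show u P (j + 2) = P * u P (j + 1) + u P j from rfl] at *
    have hp : ((-1 : ℤ)) ^ (k + 2) = (-1) ^ k := by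
      rw [pow_add]; ring
    have hq : ((-1 : ℤ)) ^ (k + 1) = -(-1) ^ k := by
      rw [pow_succ]; ring
    rw [hq] at h2
    rw [hp]
    linear_combination P * h2 + h1

theorem u_add_eq (P : ℤ) (s t : ℕ) (hst : t ≤ s) (hpar : s % 2 = t % 2) :
    u P s + (-1) ^ ((s - t) / 2) * u P t = u P ((s + t) / 2) * v P ((s - t) / 2) := by
  have h := u_key P ((s - t) / 2) ((s + t) / 2) (by omega)
  have e1 : (s + t) / 2 + (s - t) / 2 = s := by omega
  have e2 : (s + t) / 2 - (s - t) / 2 = t := by omega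
  rw [e1, e2] at h
  exact h
end

section
/- For all natural numbers s ≥ t with s and t of the same parity, u_s - (-1)^((s-t)/2) * u_t = u_{(s-t)/2} * v_{(s+t)/2}. -/
lemma vC (P : ℤ) : ∀ n, v P (n + 1) = u P (n + 2) + u P n := by
  intro n
  induction n using Nat.twoStepInduction with
  | zero => simp [u, v]
  | one => simp [u, v]; ring
  | more n ih1 ih2 =>
    have h1 : v P (n + 1 + 2) = P * v P (n + 2) + v P (n + 1) := rfl
    have h2 : u P (n + 2 + 2) = P * u P (n + 3) + u P (n + 2) := rfl
    have h3 : u P (n + 2) = P * u P (n + 1) + u P n := rfl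
    have h4 : u P (n + 3) = P * u P (n + 2) + u P (n + 1) := rfl
    show v P (n + 1 + 2) = _
    rw [h1, ih1, ih2]
    rw [h2]
    linear_combination -h3

lemma G (P : ℤ) : ∀ d t, u P (t + 2 * d) - (-1) ^ d * u P t = u P d * v P (t + d) := by
  intro d
  induction d using Nat.twoStepInduction with
  | zero => intro t; simp [u]
  | one =>
    intro t
    have e : t + 2 * 1 = t + 2 := by ring
    rw [e]
    have h1 : u P (t + 2) = P * u P (t + 1) + u P t := rfl
    have h2 : v P (t + 1) = u P (t + 2) + u P t := vC P t
    simp only [u, h2, h1]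
    ring
  | more d ih1 ih2 =>
    intro t
    have ha := ih1 (t + 2)
    have hb := ih2 (t + 1)
    have e1 : t + 2 + 2 * d = t + 2 * d + 2 := by ring
    have e2 : t + 1 + 2 * (d + 1) = t + 2 * d + 3 := by ring
    have e3 : t + 2 * (d + 2) = t + 2 * d + 2 + 2 := by ring
    have e4 : t + 2 + d = t + d + 2 := by ring
    have e5 : t + 1 + (d + 1) = t + d + 2 := by ring
    have e6 : t + (d + 2) = t + d + 2 := by ring
    rw [e1, e4] at ha
    rw [e2, e5] at hb
    rw [e3, e6]
    have h1 : u P (t + 2 * d + 2 + 2) = P * u P (t + 2 * d + 3) + u P (t + 2 * d + 2) := rfl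
    have h2 : u P (d + 2) = P * u P (d + 1) + u P d := rfl
    have h3 : u P (t + 2) = P * u P (t + 1) + u P t := rfl
    have e7 : t + 2 * d + 2 + 1 = t + 2 * d + 3 := by ring
    rw [h1, h2]
    rw [h3] at ha
    have hpow : ((-1 : ℤ)) ^ (d + 2) = (-1) ^ d := by
      rw [pow_succ, pow_succ]; ring
    have hpow2 : ((-1 : ℤ)) ^ (d + 1) = -(-1) ^ d := by
      rw [pow_succ]; ring
    rw [hpow]
    rw [hpow2] at hb
    linear_combination P * hb + ha

theorem u_sub_eq (P : ℤ) (s t : ℕ) (hst : t ≤ s) (hpar : s % 2 = t % 2) :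
    u P s - (-1) ^ ((s - t) / 2) * u P t = u P ((s - t) / 2) * v P ((s + t) / 2) := by
  set d := (s - t) / 2 with hd
  have hs : s = t + 2 * d := by omega
  have hm : (s + t) / 2 = t + d := by omega
  rw [hm, hs]
  exact G P d t
end

section
/- For all natural numbers s ≥ t with s and t of the same parity, v_s - (-1)^((s-t)/2) * v_t = D * u_{(s+t)/2} * u_{(s-t)/2}, where D = P^2 + 4. -/
lemma cassini (P : ℤ) : ∀ k, u P (k+1)^2 - u P k * u P (k+2) = (-1)^k := by
  intro k
  induction k with
  | zero => simp [u]
  | succ n ih =>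
    simp only [u] at ih ⊢
    linear_combination -ih

lemma base (P : ℤ) : ∀ k, (v P (2*k) - (-1)^k * 2 = (P^2+4) * u P k * u P k) ∧
    (v P (2*k+1) - (-1)^k * P = (P^2+4) * u P (k+1) * u P k) := by
  intro k
  induction k with
  | zero => simp [u, v]
  | succ n ih =>
    obtain ⟨h0, h1⟩ := ih
    have hc := cassini P n
    have hu : u P (n+2) = P * u P (n+1) + u P n := rfl
    have h0x : v P (2*n+2) - (-1)^(n+1) * 2 = (P^2+4) * u P (n+1) * u P (n+1) := by
      simp only [v]
      linear_combination P * h1 + h0 - (P^2+4) * hc - (P^2+4) * u P n * hu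
    constructor
    · rw [show 2*(n+1) = 2*n+2 from by ring]; exact h0x
    · rw [show 2*(n+1)+1 = (2*n+1)+2 from by ring]
      simp only [v]
      rw [show n+1+1 = n+2 from by ring]
      linear_combination (P^2+1) * h1 + P * h0 - (P^2+4) * u P (n+1) * hu - P*(P^2+4)*hc - P*(P^2+4)* u P n * hu

lemma main (P : ℤ) : ∀ a k, v P (a + 2*k) - (-1)^k * v P a = (P^2+4) * u P (a+k) * u P k := by
  intro a
  induction a using Nat.twoStepInduction with
  | zero =>
    intro k
    simpa [v] using (base P k).1
  | one =>
    intro k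
    have := (base P k).2
    rw [show 2*k+1 = 1+2*k from by ring, show k+1 = 1+k from by ring] at this
    simpa [v] using this
  | more a ih1 ih2 =>
    intro k
    have e1 : a+2+2*k = (a+2*k)+2 := by ring
    have e2 : a+2+k = (a+k)+2 := by ring
    rw [e1, e2]
    simp only [v, u]
    have i1 := ih1 k
    have i2 := ih2 k
    rw [show a+1+2*k = (a+2*k)+1 from by ring, show a+1+k = (a+k)+1 from by ring] at i2
    linear_combination P * i2 + i1

theorem v_sub_eq (P : ℤ) (s t : ℕ) (hst : t ≤ s) (hpar : s % 2 = t % 2) :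
    v P s - (-1) ^ ((s - t) / 2) * v P t =
      (P ^ 2 + 4) * u P ((s + t) / 2) * u P ((s - t) / 2) := by
  obtain ⟨k, hk⟩ : ∃ k, s = t + 2*k := ⟨(s-t)/2, by omega⟩
  have h1 : (s - t) / 2 = k := by omega
  have h2 : (s + t) / 2 = t + k := by omega
  rw [h1, h2, hk]
  exact main P t k
end

section
/- Suppose 3 does not divide P. Then for all natural numbers n, 4 divides n if and only if 3 divides u_n. -/
lemma key (P : ℤ) (hP : ¬ ((3:ℤ) ∣ P)) : (3:ℤ) ∣ P^2 + 2 := by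
  have h : (P : ZMod 3) ≠ 0 := by rwa [Ne, ZMod.intCast_zmod_eq_zero_iff_dvd]
  have h2 : ∀ x : ZMod 3, x ≠ 0 → x^2 + 2 = 0 := by decide
  have := h2 _ h
  have : ((P^2 + 2 : ℤ) : ZMod 3) = 0 := by push_cast; exact this
  exact (ZMod.intCast_zmod_eq_zero_iff_dvd _ 3).mp this

lemma usum (P : ℤ) (n : ℕ) : u P (n+4) + u P n = (P^2 + 2) * u P (n+2) := by
  show P * u P (n+3) + u P (n+2) + u P n = _
  show P * (P * u P (n+2) + u P (n+1)) + u P (n+2) + u P n = _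
  have : u P (n+2) = P * u P (n+1) + u P n := rfl
  nlinarith [this]

lemma step (P : ℤ) (hP : ¬ ((3:ℤ) ∣ P)) (n : ℕ) :
    (3:ℤ) ∣ u P (n+4) ↔ (3:ℤ) ∣ u P n := by
  have hs : (3:ℤ) ∣ u P (n+4) + u P n := (usum P n) ▸ Dvd.dvd.mul_right (key P hP) _
  constructor
  · intro h; have := dvd_sub hs h; simpa using this
  · intro h; have := dvd_sub hs h; simpa using this

theorem four_dvd_iff_three_dvd_u (P : ℤ) (hP : ¬ (3 ∣ P)) (n : ℕ) :
    4 ∣ n ↔ (3 : ℤ) ∣ u P n := by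
  induction n using Nat.strong_induction_on with
  | _ n ih =>
    match n with
    | 0 => simp [u]
    | 1 => simp [u]
    | 2 =>
      have : u P 2 = P := by show P * 1 + 0 = P; ring
      rw [this]
      constructor
      · intro h; omega
      · intro h; exact absurd h hP
    | 3 =>
      have h3 : u P 3 = P^2 + 1 := by show P * (P * 1 + 0) + 1 = _; ring
      rw [h3]
      constructor
      · intro h; omega
      · intro h
        have := key P hP
        have : (3:ℤ) ∣ 1 := by
          have := dvd_sub this h; simpa using this
        norm_num at this
    | (m + 4) =>
      rw [step P hP m, ← ih m (by omega)]
      omega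
end

section
/- Suppose 3 does not divide P. Then for all natural numbers n, n ≡ 2 (mod 4) if and only if 3 divides v_n. -/
lemma v_add_four (P : ℤ) (n : ℕ) :
    v P (n + 4) = (P ^ 2 + 2) * v P (n + 2) - v P n := by
  have h3 : v P (n + 3) = P * v P (n + 2) + v P (n + 1) := rfl
  have h2 : v P (n + 2) = P * v P (n + 1) + v P n := rfl
  show P * v P (n + 3) + v P (n + 2) = _
  rw [h3]
  linear_combination -h2

lemma sq_add_two (P : ℤ) (hP : ¬ (3 ∣ P)) : (3 : ℤ) ∣ P ^ 2 + 2 := by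
  have h : P % 3 = 1 ∨ P % 3 = 2 := by omega
  rcases h with h | h
  · obtain ⟨k, hk⟩ : ∃ k, P = 3 * k + 1 := ⟨P / 3, by omega⟩
    exact ⟨3 * k ^ 2 + 2 * k + 1, by rw [hk]; ring⟩
  · obtain ⟨k, hk⟩ : ∃ k, P = 3 * k + 2 := ⟨P / 3, by omega⟩
    exact ⟨3 * k ^ 2 + 4 * k + 2, by rw [hk]; ring⟩

theorem two_mod_four_iff_three_dvd_v (P : ℤ) (hP : ¬ (3 ∣ P)) (n : ℕ) :
    n % 4 = 2 ↔ (3 : ℤ) ∣ v P n := by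
  have hsq := sq_add_two P hP
  induction n using Nat.strong_induction_on with
  | _ n ih =>
    match n, ih with
    | 0, _ => norm_num [v]
    | 1, _ => simpa [v] using hP
    | 2, _ =>
      have h2 : (3 : ℤ) ∣ v P 2 := by
        convert hsq using 1
        show P * P + 2 = _
        ring
      simpa using h2
    | 3, _ =>
      have e3 : v P 3 = P ^ 3 + 3 * P := by
        show P * (P * P + 2) + P = _
        ring
      constructor
      · omega
      · intro h
        rw [e3] at h
        have h1 : (3 : ℤ) ∣ P ^ 3 := by
          have : (3 : ℤ) ∣ 3 * P := ⟨P, rfl⟩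
          omega
        exact absurd (Int.prime_three.dvd_of_dvd_pow h1) hP
    | (m + 4), ih =>
      have h := ih m (by omega)
      rw [v_add_four, dvd_sub_right (hsq.mul_right _),
        show (m + 4) % 4 = m % 4 by omega]
      exact h
end

section
/- Suppose 3 does not divide P, and let δ = ord_3(P^2 + 2). Then for all k ≥ δ, the shortest period length of the sequence (u_n) modulo 3^k is 8 · 3^(k−δ); that is, 8 · 3^(k−δ) is the least positive integer h such that u_{n+h} ≡ u_n (mod 3^k) for all n. -/
namespace PeriodU

lemma u_rec (P : ℤ) (n : ℕ) : u P (n+2) = P * u P (n+1) + u P n := rfl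

def A (P : ℤ) : Matrix (Fin 2) (Fin 2) ℤ := !![P, 1; 1, 0]

lemma A_pow (P : ℤ) (n : ℕ) :
    (A P) ^ n = !![u P (n+1), u P n; u P n, u P (n+1) - P * u P n] := by
  induction n with
  | zero => simp [u]; exact Matrix.one_fin_two
  | succ n ih =>
    rw [pow_succ, ih, A, Matrix.mul_fin_two, u_rec]
    congr 1 <;> ring

lemma u_add (P : ℤ) (m n : ℕ) :
    u P (m+n) = u P (m+1) * u P n + u P m * (u P (n+1) - P * u P n) := by
  have h : (A P) ^ (m+n) = (A P)^m * (A P)^n := pow_add _ _ _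
  rw [A_pow, A_pow, A_pow, Matrix.mul_fin_two] at h
  have := Matrix.ext_iff.mpr h 0 1
  simpa using this

lemma u_add' (P : ℤ) (m n : ℕ) :
    u P (m+n+1) = u P (m+1) * u P (n+1) + u P m * u P n := by
  have h : (A P) ^ (m+n) = (A P)^m * (A P)^n := pow_add _ _ _
  rw [A_pow, A_pow, A_pow, Matrix.mul_fin_two] at h
  have := Matrix.ext_iff.mpr h 0 0
  simpa using this

lemma cat (P : ℤ) (n : ℕ) :
    u P (n+1) * (u P (n+1) - P * u P n) - u P n * u P n = (-1)^n := by
  have h := congrArg Matrix.det (A_pow P n)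
  rw [Matrix.det_pow] at h
  have hA : (A P).det = -1 := by simp [A, Matrix.det_fin_two_of]
  rw [hA, Matrix.det_fin_two_of] at h
  linarith [h]

def w (P : ℤ) (n : ℕ) : ℤ := 2 * u P (n + 1) - P * u P n

lemma w_def (P : ℤ) (n : ℕ) : w P n = 2 * u P (n + 1) - P * u P n := rfl

section
variable (P : ℤ) (n : ℕ)

lemma h2n1 : u P (2*n+1) = u P (n+1) * u P (n+1) + u P n * u P n := by
  rw [show 2*n+1 = n+n+1 from by ring, u_add']

lemma h2n : u P (2*n) = u P n * (2 * u P (n+1) - P * u P n) := by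
  rw [two_mul, u_add]; ring

lemma h3n : u P (3*n) = u P (2*n+1) * u P n + u P (2*n) * (u P (n+1) - P * u P n) := by
  rw [show 3*n = 2*n+n from by ring, u_add]

lemma h3n1 : u P (3*n+1) = u P (2*n+1) * u P (n+1) + u P (2*n) * u P n := by
  rw [show 3*n+1 = 2*n+n+1 from by ring, u_add']

lemma u_triple : u P (3*n) = u P n * (w P n ^ 2 - (-1)^n) := by
  simp only [w_def]
  rw [h3n, h2n1, h2n, ← cat P n]; ring

lemma w_triple : w P (3*n) = w P n ^ 3 - 3 * w P n * (-1)^n := by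
  simp only [w_def]
  rw [h3n1, h3n, h2n1, h2n, ← cat P n]; ring
end

section
variable (P : ℤ)
lemma hu0 : u P 0 = 0 := rfl
lemma hu1 : u P 1 = 1 := rfl
lemma hu2 : u P 2 = P := by have := u_rec P 0; rw [hu1, hu0] at this; simpa using this
lemma hu3 : u P 3 = P^2 + 1 := by have := u_rec P 1; rw [hu2, hu1] at this; rw [this]; ring
lemma hu4 : u P 4 = P^3 + 2*P := by have := u_rec P 2; rw [hu3, hu2] at this; rw [this]; ring
lemma hu5 : u P 5 = P^4 + 3*P^2 + 1 := by
  have := u_rec P 3; rw [hu4, hu3] at this; rw [this]; ring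
lemma hu8 : u P 8 = P * (P^2+2) * ((P^2+2)^2 - 2) := by
  have h6 := u_rec P 4; rw [hu5, hu4] at h6
  have h7 := u_rec P 5; rw [h6, hu5] at h7
  have h8 := u_rec P 6; rw [h7, h6] at h8
  rw [h8]; ring
lemma hw8 : w P 8 = 2 + (P^2+2)^2 * ((P^2+2)^2 - 4) := by
  have h6 := u_rec P 4; rw [hu5, hu4] at h6
  have h7 := u_rec P 5; rw [h6, hu5] at h7
  have h8 := u_rec P 6; rw [h7, h6] at h8
  have h9 := u_rec P 7; rw [h8, h7] at h9
  rw [w_def, h9, h8]; ring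
lemma hw4 : w P 4 = (P^2+2)^2 - 2 := by rw [w_def, hu5, hu4]; ring
end

lemma neg_one_8 (m : ℕ) : ((-1:ℤ))^(8*3^m) = 1 := Even.neg_one_pow ⟨4*3^m, by ring⟩
lemma neg_one_4 (m : ℕ) : ((-1:ℤ))^(4*3^m) = 1 := Even.neg_one_pow ⟨2*3^m, by ring⟩

section
variable (P q : ℤ) (δ' : ℕ)

lemma key8 (hq : ¬(3:ℤ) ∣ q) (hP : ¬(3:ℤ) ∣ P) (hPq : P^2+2 = 3^(δ'+1)*q) :
    ∀ m : ℕ, ∃ b c : ℤ, ¬(3:ℤ) ∣ b ∧ u P (8*3^m) = 3^(δ'+1+m) * b ∧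
      w P (8*3^m) = 2 + 9 * (3^(δ'+m))^2 * c := by
  have h3 : Prime (3:ℤ) := Int.prime_three
  intro m
  induction m with
  | zero =>
    refine ⟨P * q * ((3^(δ'+1)*q)^2 - 2), q^2 * ((3^(δ'+1)*q)^2 - 4), ?_, ?_, ?_⟩
    · intro hdvd
      rcases (h3.dvd_mul.mp hdvd) with h | h
      · rcases (h3.dvd_mul.mp h) with h | h
        exacts [hP h, hq h]
      · have h1 : (3:ℤ) ∣ (3^(δ'+1)*q)^2 :=
          dvd_pow (dvd_mul_of_dvd_left (dvd_pow_self 3 (Nat.succ_ne_zero δ')) q) two_ne_zero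
        have : (3:ℤ) ∣ 2 := by
          have := dvd_sub h1 h
          simpa using this
        norm_num at this
    · simp only [pow_zero, mul_one, Nat.add_zero]
      rw [hu8, hPq]; ring
    · simp only [pow_zero, mul_one, Nat.add_zero]
      rw [hw8, hPq]; ring
  | succ m ih =>
    obtain ⟨b, c, hb, hu, hw⟩ := ih
    have idx : 8*3^(m+1) = 3*(8*3^m) := by ring
    refine ⟨b * (1 + 3*(4*(3^(δ'+m):ℤ)^2*c + 9*(3^(δ'+m):ℤ)^4*c^2)),
      c*(3*(3^(δ'+m):ℤ)^2*c+1)^2, ?_, ?_, ?_⟩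
    · intro hdvd
      rcases h3.dvd_mul.mp hdvd with h | h
      · exact hb h
      · rcases h with ⟨t, ht⟩; omega
    · rw [idx, u_triple, neg_one_8, hu, hw]; ring
    · rw [idx, w_triple, neg_one_8, hw]; ring

lemma key4 (hq : ¬(3:ℤ) ∣ q) (hPq : P^2+2 = 3^(δ'+1)*q) :
    ∀ m : ℕ, ∃ d : ℤ, w P (4*3^m) = 1 + 3*d := by
  intro m
  induction m with
  | zero =>
    refine ⟨3*(3^δ'*q)^2 - 1, ?_⟩
    simp only [pow_zero, mul_one]
    rw [hw4, hPq, pow_succ]; ring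
  | succ m ih =>
    obtain ⟨d, hd⟩ := ih
    have idx : 4*3^(m+1) = 3*(4*3^m) := by ring
    exact ⟨9*d^2 + 9*d^3 - 1, by rw [idx, w_triple, neg_one_4, hd]; ring⟩
end

noncomputable def M (P : ℤ) (k : ℕ) : Matrix (Fin 2) (Fin 2) (ZMod (3^k)) :=
  (Int.castRingHom (ZMod (3^k))).mapMatrix (A P)

lemma M_pow (P : ℤ) (k n : ℕ) :
    (M P k) ^ n = (Int.castRingHom (ZMod (3^k))).mapMatrix ((A P)^n) := by
  rw [M, ← map_pow]

lemma M_pow_eq_one_iff (P : ℤ) (k n : ℕ) :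
    (M P k) ^ n = 1 ↔ ((u P n : ZMod (3^k)) = 0 ∧ (u P (n+1) : ZMod (3^k)) = 1) := by
  rw [M_pow, A_pow]
  constructor
  · intro h
    have h01 := Matrix.ext_iff.mpr h 0 1
    have h00 := Matrix.ext_iff.mpr h 0 0
    simp [RingHom.mapMatrix_apply, Matrix.map_apply] at h01 h00
    exact ⟨h01, h00⟩
  · rintro ⟨h0, h1⟩
    ext i j
    fin_cases i <;> fin_cases j <;>
      simp [RingHom.mapMatrix_apply, Matrix.map_apply, h0, h1]

lemma zmod_cast_iff (k : ℕ) (a : ℤ) : ((a : ZMod (3^k)) = 0) ↔ (3:ℤ)^k ∣ a := by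
  rw [ZMod.intCast_zmod_eq_zero_iff_dvd]
  push_cast
  rfl

lemma M_pow_eq_one_iff' (P : ℤ) (k n : ℕ) :
    (M P k) ^ n = 1 ↔ ((3:ℤ)^k ∣ u P n ∧ (3:ℤ)^k ∣ (u P (n+1) - 1)) := by
  rw [M_pow_eq_one_iff]
  constructor
  · rintro ⟨h0, h1⟩
    refine ⟨(zmod_cast_iff k _).mp h0, (zmod_cast_iff k _).mp ?_⟩
    push_cast
    rw [h1]; ring
  · rintro ⟨h0, h1⟩
    refine ⟨(zmod_cast_iff k _).mpr h0, ?_⟩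
    have := (zmod_cast_iff k _).mpr h1
    push_cast at this
    linear_combination this

lemma period_of_pair (P : ℤ) (k h : ℕ) (h0 : (3:ℤ)^k ∣ u P h)
    (h1 : (3:ℤ)^k ∣ (u P (h+1) - 1)) :
    ∀ n : ℕ, u P (n + h) ≡ u P n [ZMOD (3:ℤ)^k] := by
  have key : ∀ n : ℕ, (u P (n + h) ≡ u P n [ZMOD (3:ℤ)^k]) ∧
      (u P (n + 1 + h) ≡ u P (n+1) [ZMOD (3:ℤ)^k]) := by
    intro n
    induction n with
    | zero =>
      constructor
      · simp only [Nat.zero_add]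
        refine Int.modEq_iff_dvd.mpr ?_
        rw [hu0, zero_sub]
        exact dvd_neg.mpr h0
      · simp only [Nat.zero_add]
        refine Int.modEq_iff_dvd.mpr ?_
        rw [hu1, show 1+h = h+1 from Nat.add_comm 1 h]
        have : (1:ℤ) - u P (h+1) = -(u P (h+1) - 1) := by ring
        rw [this]
        exact dvd_neg.mpr h1
    | succ n ih =>
      refine ⟨ih.2, ?_⟩
      have e1 : n + 1 + 1 + h = (n + h) + 2 := by omega
      have e2 : n + 1 + h = (n + h) + 1 := by omega
      rw [e1, u_rec, show n+1+1 = n+2 from rfl, u_rec]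
      exact ((e2 ▸ ih.2).mul_left P).add ih.1
  exact fun n => (key n).1

lemma dvd_split (d m : ℕ) (hdvd : d ∣ 8 * 3^m) (hne : d ≠ 8*3^m) :
    d ∣ 4 * 3^m ∨ ∃ m', m = m' + 1 ∧ d ∣ 8 * 3^m' := by
  have hn : 0 < 8*3^m := by positivity
  obtain ⟨t, ht⟩ := hdvd
  have ht1 : t ≠ 1 := by rintro rfl; rw [mul_one] at ht; exact hne ht.symm
  have ht0 : t ≠ 0 := by rintro rfl; rw [mul_zero] at ht; omega
  obtain ⟨p, hp, hpt⟩ := Nat.exists_prime_and_dvd ht1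
  have hpn : p ∣ 8*3^m := ht ▸ Dvd.dvd.mul_left hpt d
  have hp23 : p = 2 ∨ p = 3 := by
    have h8 : p ∣ 2^3*3^m := by
      have : (8:ℕ)*3^m = 2^3*3^m := by norm_num
      rwa [this] at hpn
    rcases (Nat.Prime.dvd_mul hp).1 h8 with h | h
    · exact Or.inl ((Nat.prime_dvd_prime_iff_eq hp Nat.prime_two).1 (hp.dvd_of_dvd_pow h))
    · exact Or.inr ((Nat.prime_dvd_prime_iff_eq hp Nat.prime_three).1 (hp.dvd_of_dvd_pow h))
  obtain ⟨s, rfl⟩ := hpt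
  rcases hp23 with rfl | rfl
  · left
    refine ⟨s, ?_⟩
    have h2 : 2*(4*3^m) = 2*(d*s) := by
      rw [show 2*(4*3^m) = 8*3^m by ring, ht]; ring
    omega
  · right
    rcases m with _ | m'
    · exfalso
      have : (3:ℕ) ∣ 8 := by simpa using hpn
      norm_num at this
    · refine ⟨m', rfl, s, ?_⟩
      have h2 : 3*(8*3^m') = 3*(d*s) := by
        rw [show 3*(8*3^m') = 8*3^(m'+1) by ring, ht]; ring
      omega

lemma three_dvd (P : ℤ) (hP : ¬ (3 ∣ P)) : (3:ℤ) ∣ P^2 + 2 := by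
  have h1 : (P : ZMod 3) ≠ 0 := by rwa [Ne, ZMod.intCast_zmod_eq_zero_iff_dvd]
  have h2 : ∀ x : ZMod 3, x ≠ 0 → x^2 + 2 = 0 := by decide
  have h3 := h2 _ h1
  have : ((P^2+2 : ℤ) : ZMod 3) = 0 := by push_cast; exact h3
  exact_mod_cast (ZMod.intCast_zmod_eq_zero_iff_dvd _ 3).mp this

end PeriodU

open PeriodU in
theorem period_u (P : ℤ) (hP : ¬ (3 ∣ P)) (k : ℕ)
    (hk : padicValInt 3 (P ^ 2 + 2) ≤ k) :
    IsLeast {h : ℕ | 0 < h ∧ ∀ n : ℕ, u P (n + h) ≡ u P n [ZMOD (3 : ℤ) ^ k]}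
      (8 * 3 ^ (k - padicValInt 3 (P ^ 2 + 2))) := by
  have h3dvd : (3:ℤ) ∣ P^2 + 2 := PeriodU.three_dvd P hP
  haveI : Fact (Nat.Prime 3) := ⟨by norm_num⟩
  -- extract δ' and q
  have hextract : ∃ (δ' : ℕ) (q : ℤ), ¬(3:ℤ) ∣ q ∧ P^2+2 = 3^(δ'+1)*q ∧
      padicValInt 3 (P^2+2) = δ'+1 := by
    set δ := padicValInt 3 (P^2+2) with hδ
    have hne : P^2+2 ≠ 0 := by positivity
    have hdvd : (3:ℤ)^δ ∣ P^2+2 := by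
      have := padicValInt_dvd (p := 3) (P^2+2); exact_mod_cast this
    obtain ⟨q, hq⟩ := hdvd
    have hq3 : ¬ (3:ℤ) ∣ q := by
      rintro ⟨q', rfl⟩
      have : ((3:ℕ):ℤ)^(δ+1) ∣ P^2+2 := by
        push_cast
        exact ⟨q', by rw [hq]; ring⟩
      rcases (padicValInt_dvd_iff (δ+1) (P^2+2)).mp this with h | h
      · exact hne h
      · omega
    have hδ1 : 1 ≤ δ := by
      have : ((3:ℕ):ℤ)^1 ∣ P^2+2 := by push_cast; simpa using h3dvd
      rcases (padicValInt_dvd_iff 1 (P^2+2)).mp this with h | h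
      · exact absurd h hne
      · exact h
    exact ⟨δ - 1, q, hq3, by rw [Nat.sub_add_cancel hδ1]; exact hq, by omega⟩
  obtain ⟨δ', q, hq3, hPq, hval⟩ := hextract
  rw [hval] at hk ⊢
  set m := k - (δ'+1) with hm
  have hkm : k = δ'+1+m := by omega
  obtain ⟨b, c, hb, hu, hw⟩ := key8 P q δ' hq3 hP hPq m
  -- H := 8*3^m is a period
  have hdvd_uH : (3:ℤ)^k ∣ u P (8*3^m) := ⟨b, by rw [hu, hkm]⟩
  have hdvd_wH : (3:ℤ)^k ∣ (w P (8*3^m) - 2) := by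
    refine ⟨(3:ℤ)^k * c, ?_⟩
    rw [hw, hkm]; ring
  have hdvd_uH1 : (3:ℤ)^k ∣ (u P (8*3^m+1) - 1) := by
    have h2 : (3:ℤ)^k ∣ 2 * (u P (8*3^m+1) - 1) := by
      have e : 2 * (u P (8*3^m+1) - 1) = (w P (8*3^m) - 2) + P * u P (8*3^m) := by
        rw [w_def]; ring
      rw [e]
      exact dvd_add hdvd_wH (Dvd.dvd.mul_left hdvd_uH P)
    have cop : IsCoprime ((3:ℤ)^k) 2 := IsCoprime.pow_left ⟨1, -1, by norm_num⟩
    exact cop.dvd_of_dvd_mul_left h2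
  have hMH : (M P k)^(8*3^m) = 1 := (M_pow_eq_one_iff' P k _).mpr ⟨hdvd_uH, hdvd_uH1⟩
  constructor
  · exact ⟨by positivity, period_of_pair P k _ hdvd_uH hdvd_uH1⟩
  · rintro h ⟨hpos, hper⟩
    -- h yields M^h = 1
    have p0 : (3:ℤ)^k ∣ u P h := by
      have := (hper 0).dvd
      simp only [Nat.zero_add, hu0, zero_sub] at this
      exact dvd_neg.mp this
    have p1 : (3:ℤ)^k ∣ (u P (h+1) - 1) := by
      have := (hper 1).dvd
      simp only [hu1] at this
      rw [show 1 + h = h + 1 from by omega] at this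
      have e : (1:ℤ) - u P (h+1) = -(u P (h+1) - 1) := by ring
      rw [e] at this
      exact dvd_neg.mp this
    have hMh : (M P k)^h = 1 := (M_pow_eq_one_iff' P k _).mpr ⟨p0, p1⟩
    set d := orderOf (M P k) with hd
    have dH : d ∣ 8*3^m := orderOf_dvd_iff_pow_eq_one.mpr hMH
    have dh : d ∣ h := orderOf_dvd_iff_pow_eq_one.mpr hMh
    by_cases hdH : d = 8*3^m
    · exact Nat.le_of_dvd hpos (hdH ▸ dh)
    · exfalso
      rcases dvd_split d m dH hdH with hcase | ⟨m', hm', hcase⟩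
      · -- half period: contradiction via w ≡ 1 mod 3
        have hM4 : (M P k)^(4*3^m) = 1 := orderOf_dvd_iff_pow_eq_one.mp (hd ▸ hcase)
        obtain ⟨q0, q1⟩ := (M_pow_eq_one_iff' P k _).mp hM4
        have hw2 : (3:ℤ)^k ∣ (w P (4*3^m) - 2) := by
          have e : w P (4*3^m) - 2 = 2*(u P (4*3^m+1) - 1) - P * u P (4*3^m) := by
            rw [w_def]; ring
          rw [e]
          exact dvd_sub (Dvd.dvd.mul_left q1 2) (Dvd.dvd.mul_left q0 P)
        obtain ⟨d0, hd0⟩ := key4 P q δ' hq3 hPq m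
        have h3k : (3:ℤ) ∣ (3:ℤ)^k := dvd_pow_self 3 (by omega)
        have : (3:ℤ) ∣ (w P (4*3^m) - 2) := h3k.trans hw2
        rw [hd0] at this
        rcases this with ⟨t, ht⟩
        omega
      · -- third period: contradiction via valuation of u
        have hM8 : (M P k)^(8*3^m') = 1 := orderOf_dvd_iff_pow_eq_one.mp (hd ▸ hcase)
        obtain ⟨q0, _⟩ := (M_pow_eq_one_iff' P k _).mp hM8
        obtain ⟨b', c', hb', hu', _⟩ := key8 P q δ' hq3 hP hPq m'
        rw [hu'] at q0
        have hkeq : k = (δ'+1+m') + 1 := by omega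
        rw [hkeq, pow_succ] at q0
        have hne3 : ((3:ℤ)^(δ'+1+m')) ≠ 0 := pow_ne_zero _ (by norm_num)
        exact hb' ((mul_dvd_mul_iff_left hne3).mp q0)
end

section
/- Suppose 3 does not divide P, and let δ = ord_3(P^2 + 2). Then for all k ≥ δ and all natural numbers n, v_{n + 4·3^(k−δ)} ≡ −v_n (mod 3^k). -/
/-!
Let `A = !![P, 1; 1, 0]`, so that `A ^ m` sends `(v (n+1), v n)` to `(v (n+m+1), v (n+m))`.
From `A ^ 2 = P A + 1` one gets `A ^ 4 + 1 = (P ^ 2 + 2) (P A + 1)`, hence `3 ^ δ ∣ A ^ 4 + 1`,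
and `δ ≥ 1` because `3 ∤ P`. Cubing lifts a congruence `M ≡ -1 (mod 3 ^ a)` with `a ≥ 1` to
`M ^ 3 ≡ -1 (mod 3 ^ (a+1))`, so `A ^ (4 * 3 ^ j) ≡ -1 (mod 3 ^ (δ + j))`, which applied to the
vector `(v (n+1), v n)` is the claim.
-/

section Lifting

variable {R : Type*} [Ring R]

theorem three_pow_succ_dvd_pow_three_add_one {M : R} {a : ℕ} (ha : a ≠ 0)
    (h : (3 : R) ^ a ∣ M + 1) : (3 : R) ^ (a + 1) ∣ M ^ 3 + 1 := by
  obtain ⟨X, hX⟩ := h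
  set Y := (3 : R) ^ a * X
  have hM : M = Y - 1 := eq_sub_of_add_eq hX
  have hcube : M ^ 3 + 1 = Y ^ 2 * (Y - 3) + 3 * Y := by rw [hM]; noncomm_ring
  have hY : (3 : R) ^ (a + 1) ∣ 3 * Y := ⟨X, by rw [pow_succ', mul_assoc]⟩
  have hY2 : (3 : R) ^ (a + 1) ∣ Y ^ 2 := by
    have hcomm : Commute X ((3 : R) ^ a) := ((Commute.ofNat_left 3 X).pow_left a).symm
    have hsq : Y ^ 2 = (3 : R) ^ (a + a) * X ^ 2 := by
      rw [sq, sq, pow_add, mul_assoc, ← mul_assoc X, hcomm.eq, mul_assoc, ← mul_assoc]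
    rw [hsq]
    exact (pow_dvd_pow 3 (by omega)).mul_right _
  rw [hcube]
  exact dvd_add (hY2.mul_right _) hY

theorem three_pow_add_dvd_pow_three_pow_add_one {M : R} {a : ℕ} (ha : a ≠ 0)
    (h : (3 : R) ^ a ∣ M + 1) (j : ℕ) : (3 : R) ^ (a + j) ∣ M ^ 3 ^ j + 1 := by
  induction j with
  | zero => simpa using h
  | succ j ih =>
    rw [pow_succ, pow_mul, ← add_assoc]
    exact three_pow_succ_dvd_pow_three_add_one (by omega) ih

theorem pow_four_add_one_of_sq_eq {A : R} {P : ℤ} (hA : A ^ 2 = P * A + 1) :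
    A ^ 4 + 1 = ((P ^ 2 + 2 : ℤ) : R) * (P * A + 1) := by
  simp only [← zsmul_eq_mul] at hA ⊢
  rw [show A ^ 4 = (A ^ 2) ^ 2 by rw [← pow_mul], hA, (Commute.one_right _).add_sq, smul_pow, hA,
    mul_one, one_pow, two_mul]
  module

theorem three_pow_add_dvd_pow_four_mul_three_pow_add_one {A : R} {P : ℤ}
    (hA : A ^ 2 = P * A + 1) {d : ℕ} (hd : d ≠ 0) (hdvd : (3 : ℤ) ^ d ∣ P ^ 2 + 2) (j : ℕ) :
    (3 : R) ^ (d + j) ∣ A ^ (4 * 3 ^ j) + 1 := by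
  rw [pow_mul]
  refine three_pow_add_dvd_pow_three_pow_add_one hd ?_ j
  rw [pow_four_add_one_of_sq_eq hA]
  have hcast := map_dvd (Int.castRingHom R) hdvd
  rw [eq_intCast, Int.cast_pow, Int.cast_ofNat] at hcast
  exact hcast.mul_right _

end Lifting

section LucasMatrix

open Matrix

def lucasMatrix (P : ℤ) : Matrix (Fin 2) (Fin 2) ℤ := !![P, 1; 1, 0]

theorem lucasMatrix_sq (P : ℤ) : lucasMatrix P ^ 2 = P * lucasMatrix P + 1 := by
  rw [← zsmul_eq_mul]
  ext i j
  fin_cases i <;> fin_cases j <;> simp [lucasMatrix, sq]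

theorem lucasMatrix_pow_mulVec (P : ℤ) (n m : ℕ) :
    lucasMatrix P ^ m *ᵥ ![v P (n + 1), v P n] = ![v P (n + m + 1), v P (n + m)] := by
  induction m with
  | zero => simp
  | succ m ih =>
    rw [pow_succ', ← mulVec_mulVec, ih]
    ext i
    fin_cases i
    · simp [lucasMatrix, v, ← add_assoc, mul_comm]
    · simp [lucasMatrix, ← add_assoc]

theorem dvd_v_add_v_of_dvd_lucasMatrix_pow_add_one {P m : ℤ} {N : ℕ}
    (h : (m : Matrix (Fin 2) (Fin 2) ℤ) ∣ lucasMatrix P ^ N + 1) (n : ℕ) :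
    m ∣ v P (n + N) + v P n := by
  obtain ⟨X, hX⟩ := h
  have hvec := congrArg (· *ᵥ ![v P (n + 1), v P n]) hX
  simp only [add_mulVec, lucasMatrix_pow_mulVec, one_mulVec, ← zsmul_eq_mul, smul_mulVec] at hvec
  have hsnd := congrFun hvec 1
  simp only [Pi.add_apply, Pi.smul_apply, cons_val_one, cons_val_fin_one, smul_eq_mul] at hsnd
  exact Dvd.intro _ hsnd.symm

end LucasMatrix

theorem three_dvd_sq_add_two {P : ℤ} (hP : ¬ 3 ∣ P) : 3 ∣ P ^ 2 + 2 := by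
  have hP3 : (P : ZMod 3) ≠ 0 := mt (ZMod.intCast_zmod_eq_zero_iff_dvd P 3).1 hP
  refine (ZMod.intCast_zmod_eq_zero_iff_dvd _ 3).1 ?_
  push_cast
  generalize (P : ZMod 3) = x at hP3
  revert x
  decide

theorem padicValInt_three_sq_add_two_ne_zero {P : ℤ} (hP : ¬ 3 ∣ P) :
    padicValInt 3 (P ^ 2 + 2) ≠ 0 := by
  have h := (padicValInt_dvd_iff_of_ne_one (p := 3) (by norm_num) 1 (P ^ 2 + 2)).1
    (by simpa using three_dvd_sq_add_two hP)
  have hne : P ^ 2 + 2 ≠ 0 := by positivity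
  omega

theorem v_half_period (P : ℤ) (hP : ¬ (3 ∣ P)) (k : ℕ)
    (hk : padicValInt 3 (P ^ 2 + 2) ≤ k) (n : ℕ) :
    v P (n + 4 * 3 ^ (k - padicValInt 3 (P ^ 2 + 2))) ≡ -v P n [ZMOD (3 : ℤ) ^ k] := by
  set d := padicValInt 3 (P ^ 2 + 2)
  have hmat := three_pow_add_dvd_pow_four_mul_three_pow_add_one (lucasMatrix_sq P)
    (padicValInt_three_sq_add_two_ne_zero hP) (by simpa using padicValInt_dvd (p := 3) (P ^ 2 + 2))
    (k - d)
  rw [Nat.add_sub_cancel' hk] at hmat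
  have hdvd := dvd_v_add_v_of_dvd_lucasMatrix_pow_add_one (m := 3 ^ k) (by simpa using hmat) n
  exact Int.modEq_iff_dvd.2 (by rw [neg_sub_left]; exact dvd_neg.2 hdvd)
end
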